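/- Let M = [[A,B],[0,C]] be an ACI-matrix whose zero block is Big or Medium (i.e., r+s ≥ max{m,n} where the zero block is r×s and M is m×n). Then A is FRmR and C is FCmR if and only if maxRank(M) = rows(A) + cols(C). -/

import Mathlib

open MvPolynomial

/-- An ACI-matrix over a field `K`: entries are polynomials of total degree at most one
in indeterminates indexed by `ι`, and no indeterminate appears in two different columns. -/
structure ACIMatrix (K : Type) [Field K] (ι : Type) (m n : ℕ) where
  entry : Matrix (Fin m) (Fin n) (MvPolynomial ι K)
  deg_le : ∀ i j, (entry i j).totalDegree ≤ 1
  colIndep : ∀ (x : ι) (i i' : Fin m) (j j' : Fin n),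
      x ∈ (entry i j).vars → x ∈ (entry i' j').vars → j = j'

namespace ACIMatrix

variable {K : Type} [Field K] {ι : Type} {m n m' n' : ℕ}

/-- The constant matrix obtained by assigning values in `K` to all indeterminates. -/
noncomputable def completion (M : ACIMatrix K ι m n) (v : ι → K) : Matrix (Fin m) (Fin n) K :=
  fun i j => eval v (M.entry i j)

/-- The maximum rank of a completion of `M`. -/
noncomputable def maxRank (M : ACIMatrix K ι m n) : ℕ :=
  sSup {r | ∃ v : ι → K, (M.completion v).rank = r}

/-- Full row maxRank. -/
def FRmR (M : ACIMatrix K ι m n) : Prop := M.maxRank = m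

/-- Full column maxRank. -/
def FCmR (M : ACIMatrix K ι m n) : Prop := M.maxRank = n

/-- Full maxRank: some completion has full rank. -/
def FmR (M : ACIMatrix K ι m n) : Prop := M.maxRank = min m n

/-- A submatrix (with injective column selection) of an ACI-matrix is an ACI-matrix. -/
def subm (M : ACIMatrix K ι m n) (f : Fin m' → Fin m) (g : Fin n' → Fin n)
    (hg : Function.Injective g) : ACIMatrix K ι m' n' where
  entry := M.entry.submatrix f g
  deg_le := fun i j => M.deg_le _ _
  colIndep := fun x i i' j j' h h' => hg (M.colIndep x _ _ _ _ h h')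

/-- The contiguous block of size `p × q` whose top-left corner is at row `r`, column `c`. -/
def block (M : ACIMatrix K ι m n) (r c p q : ℕ) (hr : r + p ≤ m) (hc : c + q ≤ n) :
    ACIMatrix K ι p q :=
  M.subm (fun i => ⟨r + i.val, by omega⟩) (fun j => ⟨c + j.val, by omega⟩)
    (fun a b hab => Fin.ext (by
      have h : c + (a : ℕ) = c + (b : ℕ) := congrArg Fin.val hab
      omega))

/-- `M'` is equivalent to `M`:  `M' = R M Q` for a nonsingular constant matrix `R`
and a permutation `Q` of the columns. -/
def MEquiv (M M' : ACIMatrix K ι m n) : Prop :=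
  ∃ (R : Matrix (Fin m) (Fin m) K) (σ : Equiv.Perm (Fin n)),
    IsUnit R ∧ M'.entry = ((R.map MvPolynomial.C) * M.entry).submatrix id ⇑σ

/-- Transport an ACI-matrix along equalities of its dimensions. -/
def castSize (h : m = m') (h' : n = n') (M : ACIMatrix K ι m n) : ACIMatrix K ι m' n' :=
  M.subm (Fin.cast h.symm) (Fin.cast h'.symm)
    (fun a b hab => Fin.ext (by simpa using congrArg Fin.val hab))

theorem card_le_n {n : ℕ} (Fs : Finset (Fin n)) : Fs.card ≤ n :=
  (Finset.card_le_univ Fs).trans_eq (Finset.card_fin n)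

/-- `Fs` is a factor set of `M`: some `R M Q_Fs = [[A,B],[0,C]]` with a Big zero block,
`A` (on the columns of `Fs`) FRmR and `C` FCmR. -/
def IsFactorSet (M : ACIMatrix K ι m n) (Fs : Finset (Fin n)) : Prop :=
  ∃ (R : Matrix (Fin m) (Fin m) K) (σ : Equiv.Perm (Fin n)) (N : ACIMatrix K ι m n)
    (r : ℕ) (hr : r ≤ m),
    IsUnit R ∧
    (∀ j : Fin n, j ∈ Fs ↔ (σ j).val < Fs.card) ∧
    N.entry = ((R.map MvPolynomial.C) * M.entry).submatrix id ⇑σ.symm ∧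
    (∀ (i : Fin m) (j : Fin n), m - r ≤ i.val → j.val < Fs.card → N.entry i j = 0) ∧
    r + Fs.card > max m n ∧
    (N.block 0 0 (m - r) Fs.card (by omega) (by have := card_le_n Fs; omega)).FRmR ∧
    (N.block (m - r) Fs.card r (n - Fs.card) (by omega)
      (by have := card_le_n Fs; omega)).FCmR

/-- `Fs` is a semifactor set of `M`: as a factor set but with a Medium zero block. -/
def IsSemifactorSet (M : ACIMatrix K ι m n) (Fs : Finset (Fin n)) : Prop :=
  ∃ (R : Matrix (Fin m) (Fin m) K) (σ : Equiv.Perm (Fin n)) (N : ACIMatrix K ι m n)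
    (r : ℕ) (hr : r ≤ m),
    IsUnit R ∧
    (∀ j : Fin n, j ∈ Fs ↔ (σ j).val < Fs.card) ∧
    N.entry = ((R.map MvPolynomial.C) * M.entry).submatrix id ⇑σ.symm ∧
    (∀ (i : Fin m) (j : Fin n), m - r ≤ i.val → j.val < Fs.card → N.entry i j = 0) ∧
    r + Fs.card = max m n ∧
    (N.block 0 0 (m - r) Fs.card (by omega) (by have := card_le_n Fs; omega)).FRmR ∧
    (N.block (m - r) Fs.card r (n - Fs.card) (by omega)
      (by have := card_le_n Fs; omega)).FCmR

end ACIMatrix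


section Aux
open Matrix Module

section MatAux
variable {K : Type} [Field K]

lemma myRankReindex {m n m' n' : Type} [Fintype m] [Fintype n] [Fintype m'] [Fintype n']
    (e₁ : m ≃ m') (e₂ : n ≃ n') (A : Matrix m n K) :
    (reindex e₁ e₂ A).rank = A.rank := by
  rw [Matrix.rank, Matrix.rank, mulVecLin_reindex, LinearMap.range_comp, LinearMap.range_comp,
    LinearEquiv.range, Submodule.map_top, LinearEquiv.finrank_map_eq]

variable {α β γ δ : Type} [Fintype α] [Fintype β] [Fintype γ] [Fintype δ]
  [DecidableEq α] [DecidableEq β] [DecidableEq γ] [DecidableEq δ]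

lemma myRankAddLe (A B : Matrix α β K) : (A + B).rank ≤ A.rank + B.rank := by
  have h : LinearMap.range (A + B).mulVecLin ≤
      LinearMap.range A.mulVecLin ⊔ LinearMap.range B.mulVecLin := by
    rintro x ⟨y, rfl⟩
    rw [Matrix.mulVecLin_add, LinearMap.add_apply]
    exact Submodule.add_mem_sup (LinearMap.mem_range_self _ y) (LinearMap.mem_range_self _ y)
  have h2 := Submodule.finrank_sup_add_finrank_inf_eq
    (LinearMap.range A.mulVecLin) (LinearMap.range B.mulVecLin)
  have h3 := Submodule.finrank_mono h
  rw [Matrix.rank, Matrix.rank, Matrix.rank]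
  omega

lemma myLeftInv (C : Matrix γ δ K) (h : C.rank = Fintype.card δ) :
    ∃ D : Matrix δ γ K, D * C = 1 := by
  have hker : LinearMap.ker C.mulVecLin = ⊥ := by
    have h2 := LinearMap.finrank_range_add_finrank_ker C.mulVecLin
    rw [Module.finrank_fintype_fun_eq_card] at h2
    rw [Matrix.rank] at h
    have : finrank K (LinearMap.ker C.mulVecLin) = 0 := by omega
    exact Submodule.finrank_eq_zero.mp this
  obtain ⟨g, hg⟩ := C.mulVecLin.exists_leftInverse_of_injective hker
  refine ⟨LinearMap.toMatrix' g, ?_⟩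
  have hm : (LinearMap.toMatrix' g * C).mulVecLin = (1 : Matrix δ δ K).mulVecLin := by
    rw [Matrix.mulVecLin_mul, Matrix.mulVecLin_one,
      show (LinearMap.toMatrix' g).mulVecLin = g from by
        rw [← Matrix.toLin'_apply', Matrix.toLin'_toMatrix'], hg]
  calc LinearMap.toMatrix' g * C
      = LinearMap.toMatrix' (Matrix.toLin' (LinearMap.toMatrix' g * C)) :=
        (LinearMap.toMatrix'_toLin' _).symm
    _ = LinearMap.toMatrix' (Matrix.toLin' (1 : Matrix δ δ K)) := by
        rw [Matrix.toLin'_apply', Matrix.toLin'_apply', hm]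
    _ = 1 := LinearMap.toMatrix'_toLin' _

lemma myRightInv (A : Matrix α β K) (h : A.rank = Fintype.card α) :
    ∃ E : Matrix β α K, A * E = 1 := by
  have hsurj : LinearMap.range A.mulVecLin = ⊤ := by
    apply Submodule.eq_top_of_finrank_eq
    rw [← Matrix.rank, h, Module.finrank_fintype_fun_eq_card]
  obtain ⟨g, hg⟩ := A.mulVecLin.exists_rightInverse_of_surjective hsurj
  refine ⟨LinearMap.toMatrix' g, ?_⟩
  have hm : (A * LinearMap.toMatrix' g).mulVecLin = (1 : Matrix α α K).mulVecLin := by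
    rw [Matrix.mulVecLin_mul, Matrix.mulVecLin_one,
      show (LinearMap.toMatrix' g).mulVecLin = g from by
        rw [← Matrix.toLin'_apply', Matrix.toLin'_toMatrix'], hg]
  calc A * LinearMap.toMatrix' g
      = LinearMap.toMatrix' (Matrix.toLin' (A * LinearMap.toMatrix' g)) :=
        (LinearMap.toMatrix'_toLin' _).symm
    _ = LinearMap.toMatrix' (Matrix.toLin' (1 : Matrix α α K)) := by
        rw [Matrix.toLin'_apply', Matrix.toLin'_apply', hm]
    _ = 1 := LinearMap.toMatrix'_toLin' _

lemma myRowsSplit (X : Matrix α (β ⊕ δ) K) (Y : Matrix γ (β ⊕ δ) K) :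
    fromRows X 0 + fromRows 0 Y = fromRows X Y := by
  ext i j; cases i <;> simp

lemma myColsSplit (X : Matrix (α ⊕ γ) β K) (Y : Matrix (α ⊕ γ) δ K) :
    fromCols X 0 + fromCols 0 Y = fromCols X Y := by
  ext i j; cases j <;> simp

lemma myUpperLeft (A : Matrix α β K) (B : Matrix α δ K) (C : Matrix γ δ K) :
    (fromBlocks A B (0 : Matrix γ β K) C).rank ≤ Fintype.card α + C.rank := by
  have e1 : fromRows (1 : Matrix α α K) (0 : Matrix γ α K) * fromCols A B
      = fromRows (fromCols A B) (0 : Matrix γ (β ⊕ δ) K) := by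
    rw [fromRows_mul, Matrix.one_mul, Matrix.zero_mul]
  have e2 : C * fromCols (0 : Matrix δ β K) (1 : Matrix δ δ K)
      = fromCols (0 : Matrix γ β K) C := by
    rw [mul_fromCols, Matrix.mul_zero, Matrix.mul_one]
  have e3 : fromRows (0 : Matrix α γ K) (1 : Matrix γ γ K) *
        fromCols (0 : Matrix γ β K) C
      = fromRows (0 : Matrix α (β ⊕ δ) K) (fromCols (0 : Matrix γ β K) C) := by
    rw [fromRows_mul, Matrix.zero_mul, Matrix.one_mul]
  have hd : fromBlocks A B (0 : Matrix γ β K) C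
      = fromRows (fromCols A B) (0 : Matrix γ (β ⊕ δ) K)
        + fromRows (0 : Matrix α (β ⊕ δ) K) (fromCols (0 : Matrix γ β K) C) := by
    rw [myRowsSplit, fromRows_fromCols_eq_fromBlocks]
  rw [hd]
  refine (myRankAddLe _ _).trans (add_le_add ?_ ?_)
  · rw [← e1]
    exact (Matrix.rank_mul_le_right _ _).trans (Matrix.rank_le_card_height _)
  · rw [← e3, ← e2]
    exact (Matrix.rank_mul_le_right _ _).trans (Matrix.rank_mul_le_left _ _)

lemma myUpperRight (A : Matrix α β K) (B : Matrix α δ K) (C : Matrix γ δ K) :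
    (fromBlocks A B (0 : Matrix γ β K) C).rank ≤ A.rank + Fintype.card δ := by
  have f1 : fromRows (1 : Matrix α α K) (0 : Matrix γ α K) * A
      = fromRows A (0 : Matrix γ β K) := by
    rw [fromRows_mul, Matrix.one_mul, Matrix.zero_mul]
  have f2 : fromRows A (0 : Matrix γ β K) * fromCols (1 : Matrix β β K) (0 : Matrix β δ K)
      = fromCols (fromRows A (0 : Matrix γ β K)) (0 : Matrix (α ⊕ γ) δ K) := by
    rw [mul_fromCols, Matrix.mul_one, Matrix.mul_zero]
  have f3 : fromRows B C * fromCols (0 : Matrix δ β K) (1 : Matrix δ δ K)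
      = fromCols (0 : Matrix (α ⊕ γ) β K) (fromRows B C) := by
    rw [mul_fromCols, Matrix.mul_zero, Matrix.mul_one]
  have hd : fromBlocks A B (0 : Matrix γ β K) C
      = fromCols (fromRows A (0 : Matrix γ β K)) (0 : Matrix (α ⊕ γ) δ K)
        + fromCols (0 : Matrix (α ⊕ γ) β K) (fromRows B C) := by
    rw [myColsSplit, fromCols_fromRows_eq_fromBlocks]
  rw [hd]
  refine (myRankAddLe _ _).trans (add_le_add ?_ ?_)
  · rw [← f2, ← f1]
    exact (Matrix.rank_mul_le_left _ _).trans (Matrix.rank_mul_le_right _ _)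
  · rw [← f3]
    exact (Matrix.rank_mul_le_left _ _).trans (Matrix.rank_le_card_width _)

lemma myLower (A : Matrix α β K) (B : Matrix α δ K) (C : Matrix γ δ K)
    (hA : A.rank = Fintype.card α) (hC : C.rank = Fintype.card δ) :
    Fintype.card α + Fintype.card δ ≤ (fromBlocks A B (0 : Matrix γ β K) C).rank := by
  obtain ⟨E, hE⟩ := myRightInv A hA
  obtain ⟨D, hD⟩ := myLeftInv C hC
  have key : fromBlocks (1 : Matrix α α K) 0 0 D *
      ((fromBlocks (1 : Matrix α α K) (-(B * D)) 0 (1 : Matrix γ γ K) *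
        fromBlocks A B (0 : Matrix γ β K) C) *
       fromBlocks E 0 0 (1 : Matrix δ δ K)) = 1 := by
    rw [fromBlocks_multiply, fromBlocks_multiply, fromBlocks_multiply]
    simp [Matrix.mul_assoc, hD, hE]
  calc Fintype.card α + Fintype.card δ = Fintype.card (α ⊕ δ) := (Fintype.card_sum).symm
    _ = (1 : Matrix (α ⊕ δ) (α ⊕ δ) K).rank := (Matrix.rank_one).symm
    _ ≤ (fromBlocks A B (0 : Matrix γ β K) C).rank := by
        rw [← key]
        exact (Matrix.rank_mul_le_right _ _).trans
          ((Matrix.rank_mul_le_left _ _).trans (Matrix.rank_mul_le_right _ _))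



end MatAux

section Glue
variable {K : Type} [Field K] {ι : Type} {p q : ℕ}

lemma aci_bdd (N : ACIMatrix K ι p q) :
    BddAbove {k | ∃ v : ι → K, (N.completion v).rank = k} :=
  ⟨p, fun k ⟨v, hv⟩ => hv ▸ Matrix.rank_le_height _⟩

lemma aci_ne (N : ACIMatrix K ι p q) :
    {k | ∃ v : ι → K, (N.completion v).rank = k}.Nonempty :=
  ⟨(N.completion (fun _ => 0)).rank, fun _ => 0, rfl⟩

lemma aci_le_maxRank (N : ACIMatrix K ι p q) (v : ι → K) :
    (N.completion v).rank ≤ N.maxRank := le_csSup (aci_bdd N) ⟨v, rfl⟩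

lemma aci_maxRank_le (N : ACIMatrix K ι p q) {k : ℕ} (h : ∀ v, (N.completion v).rank ≤ k) :
    N.maxRank ≤ k := csSup_le (aci_ne N) (by rintro x ⟨v, rfl⟩; exact h v)

lemma aci_exists_max (N : ACIMatrix K ι p q) :
    ∃ v : ι → K, (N.completion v).rank = N.maxRank :=
  Nat.sSup_mem (aci_ne N) (aci_bdd N)

lemma eval_congr_vars {p : MvPolynomial ι K} {f g : ι → K}
    (h : ∀ x ∈ p.vars, f x = g x) : MvPolynomial.eval f p = MvPolynomial.eval g p :=
  MvPolynomial.eval₂Hom_congr' rfl (fun i h1 _ => h i h1) rfl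

end Glue
end Aux

/-- if the zero block of `M = [[A,B],[0,C]]` is Big or Medium, then
(`A` FRmR and `C` FCmR) iff `maxRank M = rows A + cols C`. -/
theorem FRmR_FCmR_iff_maxRank {K : Type} [Field K] {ι : Type} {m₁ r s n₂ : ℕ}
    (M : ACIMatrix K ι (m₁ + r) (s + n₂))
    (hz : ∀ (i : Fin (m₁ + r)) (j : Fin (s + n₂)),
      m₁ ≤ i.val → j.val < s → M.entry i j = 0)
    (h : r + s ≥ max (m₁ + r) (s + n₂)) :
    ((M.block 0 0 m₁ s (by omega) (by omega)).FRmR ∧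
     (M.block m₁ s r n₂ (by omega) (by omega)).FCmR) ↔
      M.maxRank = m₁ + n₂ := by
  classical
  set A := M.block 0 0 m₁ s (by omega) (by omega) with hAdef
  set C := M.block m₁ s r n₂ (by omega) (by omega) with hCdef
  set Bv : (ι → K) → Matrix (Fin m₁) (Fin n₂) K :=
    fun v i j => MvPolynomial.eval v (M.entry (Fin.castAdd r i) (Fin.natAdd s j)) with hBvdef
  have key : ∀ v : ι → K,
      (Matrix.reindex (finSumFinEquiv (m := m₁) (n := r)).symm
        (finSumFinEquiv (m := s) (n := n₂)).symm (M.completion v)) =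
      Matrix.fromBlocks (A.completion v) (Bv v) 0 (C.completion v) := by
    intro v
    ext i j
    rcases i with i | i <;> rcases j with j | j <;>
      simp only [Matrix.reindex_apply, Matrix.submatrix_apply, Equiv.symm_symm,
        finSumFinEquiv_apply_left, finSumFinEquiv_apply_right,
        Matrix.fromBlocks_apply₁₁, Matrix.fromBlocks_apply₁₂,
        Matrix.fromBlocks_apply₂₁, Matrix.fromBlocks_apply₂₂, Matrix.zero_apply,
        hAdef, hCdef, hBvdef, ACIMatrix.completion, ACIMatrix.block, ACIMatrix.subm,
        Matrix.submatrix_apply, Matrix.fromBlocks, Matrix.of_apply, Sum.elim_inl, Sum.elim_inr] <;>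
      first
        | rfl
        | (congr 2 <;> exact Fin.ext (by simp))
        | (rw [hz _ _ (by simp) (by simpa using j.isLt), map_zero])
  have hrank : ∀ v : ι → K, (M.completion v).rank =
      (Matrix.fromBlocks (A.completion v) (Bv v) 0 (C.completion v)).rank := by
    intro v
    rw [← key v, myRankReindex]
  have hup : ∀ w : ι → K, (M.completion w).rank ≤ m₁ + n₂ := by
    intro w
    rw [hrank w]
    refine (myUpperLeft _ _ _).trans ?_
    have := Matrix.rank_le_width (C.completion w)
    simp only [Fintype.card_fin]
    omega
  constructor
  · rintro ⟨hA, hC⟩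
    have hA' : A.maxRank = m₁ := hA
    have hC' : C.maxRank = n₂ := hC
    obtain ⟨v₁, hv₁⟩ := aci_exists_max A
    obtain ⟨v₂, hv₂⟩ := aci_exists_max C
    rw [hA'] at hv₁
    rw [hC'] at hv₂
    set P : ι → Prop :=
      fun x => ∃ (i : Fin (m₁ + r)) (j : Fin (s + n₂)), j.val < s ∧ x ∈ (M.entry i j).vars
      with hPdef
    set v : ι → K := fun x => if P x then v₁ x else v₂ x with hvdef
    have hvA : A.completion v = A.completion v₁ := by
      ext i j
      apply eval_congr_vars
      intro x hx
      have hP : P x := by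
        refine ⟨⟨(0 : ℕ) + i.val, by omega⟩, ⟨(0 : ℕ) + j.val, by omega⟩, by
          simpa using j.isLt, hx⟩
      simp only [hvdef, if_pos hP]
    have hvC : C.completion v = C.completion v₂ := by
      ext i j
      apply eval_congr_vars
      intro x hx
      have hnP : ¬ P x := by
        rintro ⟨i', j', hj', hx'⟩
        have hcol := M.colIndep x _ i' _ j' hx hx'
        have := congrArg Fin.val hcol
        simp only [ACIMatrix.block, ACIMatrix.subm] at this
        omega
      simp only [hvdef, if_neg hnP]
    have hAv : (A.completion v).rank = m₁ := by rw [hvA, hv₁]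
    have hCv : (C.completion v).rank = n₂ := by rw [hvC, hv₂]
    have hlow : m₁ + n₂ ≤ (M.completion v).rank := by
      rw [hrank v]
      have := myLower (A.completion v) (Bv v) (C.completion v)
        (by rw [hAv, Fintype.card_fin]) (by rw [hCv, Fintype.card_fin])
      simpa [Fintype.card_fin] using this
    exact le_antisymm (aci_maxRank_le M hup) (hlow.trans (aci_le_maxRank M v))
  · intro hmax
    obtain ⟨v, hv⟩ := aci_exists_max M
    rw [hmax] at hv
    rw [hrank v] at hv
    have hCub : (C.completion v).rank ≤ n₂ := Matrix.rank_le_width _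
    have hAub : (A.completion v).rank ≤ m₁ := Matrix.rank_le_height _
    have h1 := myUpperLeft (A.completion v) (Bv v) (C.completion v)
    have h2 := myUpperRight (A.completion v) (Bv v) (C.completion v)
    rw [Fintype.card_fin] at h1
    rw [Fintype.card_fin] at h2
    have hCv : (C.completion v).rank = n₂ := by omega
    have hAv : (A.completion v).rank = m₁ := by omega
    constructor
    · exact le_antisymm (aci_maxRank_le A fun w => Matrix.rank_le_height _)
        (hAv.ge.trans (aci_le_maxRank A v))
    · exact le_antisymm (aci_maxRank_le C fun w => Matrix.rank_le_width _)
        (hCv.ge.trans (aci_le_maxRank C v))
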